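/- arXiv:1011.0356 — 3 statements merged into one kernel-verified Lean document; each statement's English description precedes it below -/
import Mathlib

section
/- Let E_+ and E_- be finite dimensional vector spaces over a field F of the same dimension, and let α be an odd exact endomorphism of E = E_+ ⊕ E_- with components α_+ : E_+ → E_- and α_- : E_- → E_+ (i.e. Ker(α_+) = Im(α_-) and Ker(α_-) = Im(α_+)). If α_-^† and α_-^* are two pseudo-inverses of α_-, then the linear maps α_+ + α_-^† and α_+ + α_-^* from E_+ to E_- are both isomorphisms and induce the same map det(E_+) → det(E_-) on top exterior powers. -/
/-!
Write `φᵢ = α₊ + gᵢ`. The relations `α₊ α₋ = 0`, `α₋ α₊ = 0`, `α₋ gᵢ α₋ = α₋` and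
`gᵢ α₋ gᵢ = gᵢ` give the factorization `φ₂ = (1 + (g₂ α₋ - g₁ α₋)) ∘ φ₁ ∘ (1 + (α₋ g₂ - α₋ g₁))`,
in which both outer factors are unipotent (their nilpotent parts square to zero). An endomorphism
acts on the top exterior power by its determinant, and a unipotent one has determinant `1`.
Bijectivity of `φᵢ` follows from exactness and `dim E₊ = dim E₋`.
-/

open Module

def IsPseudoInverse {F : Type} [Field F] {M N : Type} [AddCommGroup M] [Module F M]
    [AddCommGroup N] [Module F N] (β : M →ₗ[F] N) (g : N →ₗ[F] M) : Prop :=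
  β ∘ₗ g ∘ₗ β = β ∧ g ∘ₗ β ∘ₗ g = g

theorem LinearMap.det_one_add_of_isNilpotent {R M : Type*} [CommRing R] [IsDomain R]
    [AddCommGroup M] [Module R M] [Module.Free R M] [Module.Finite R M]
    {N : Module.End R M} (hN : IsNilpotent N) : LinearMap.det (1 + N) = 1 := by
  -- `det (1 + N)` is the characteristic polynomial `X ^ finrank` of `-N` evaluated at `1`.
  have := congrArg (Polynomial.eval 1) hN.neg.charpoly_eq_X_pow_finrank
  rwa [LinearMap.eval_charpoly, map_one, sub_neg_eq_add, Polynomial.eval_pow,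
    Polynomial.eval_X, one_pow] at this

theorem AlternatingMap.apply_eq_basis_det_smul {R M N ι : Type*} [CommRing R] [AddCommGroup M]
    [Module R M] [AddCommGroup N] [Module R N] [Fintype ι] [DecidableEq ι]
    (f : M [⋀^ι]→ₗ[R] N) (e : Basis ι R M) (v : ι → M) : f v = e.det v • f e := by
  suffices f = e.det.smulRight (f e) from congrArg (· v) this
  refine e.ext_alternating fun i hi => ?_
  let σ : Equiv.Perm ι := Equiv.ofBijective i (Finite.injective_iff_bijective.1 hi)
  change f (e ∘ σ) = e.det (e ∘ σ) • f e
  simp [AlternatingMap.map_perm, Basis.det_self]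

namespace ExteriorAlgebra

variable {R M : Type*} [CommRing R] [AddCommGroup M] [Module R M] {n : ℕ}

theorem map_mem_exteriorPower {N : Type*} [AddCommGroup N] [Module R N] (f : M →ₗ[R] N)
    {x : ExteriorAlgebra R M} (hx : x ∈ ⋀[R]^n M) : map f x ∈ ⋀[R]^n N := by
  rw [← ιMulti_span_fixedDegree] at hx
  induction hx using Submodule.span_induction with
  | mem y hy =>
    obtain ⟨v, rfl⟩ := hy
    rw [map_apply_ιMulti]
    exact ιMulti_range R n ⟨_, rfl⟩
  | zero => simp
  | add x y _ _ hx hy => rw [map_add]; exact add_mem hx hy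
  | smul c x _ hx => rw [map_smul]; exact Submodule.smul_mem _ c hx

variable [StrongRankCondition R] [Module.Free R M] [Module.Finite R M]

theorem ιMulti_comp_eq_det_smul (hn : finrank R M = n) (f : Module.End R M) (v : Fin n → M) :
    ιMulti R n (f ∘ v) = LinearMap.det f • ιMulti R n v := by
  let e := finBasisOfFinrankEq R M hn
  rw [(ιMulti R n).apply_eq_basis_det_smul e, (ιMulti R n).apply_eq_basis_det_smul e v,
    e.det_comp, mul_smul]

theorem map_apply_eq_det_smul (hn : finrank R M = n) (f : Module.End R M)
    {x : ExteriorAlgebra R M} (hx : x ∈ ⋀[R]^n M) : map f x = LinearMap.det f • x := by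
  rw [← ιMulti_span_fixedDegree] at hx
  induction hx using Submodule.span_induction with
  | mem y hy =>
    obtain ⟨v, rfl⟩ := hy
    rw [map_apply_ιMulti, ← ιMulti_comp_eq_det_smul hn]
  | zero => simp
  | add x y _ _ hx hy => rw [map_add, hx, hy, smul_add]
  | smul c x _ hx => rw [map_smul, hx, smul_comm]

end ExteriorAlgebra

namespace IsPseudoInverse

variable {F : Type} [Field F] {M N : Type} [AddCommGroup M] [Module F M]
  [AddCommGroup N] [Module F N] {β : M →ₗ[F] N} {g g₁ g₂ : N →ₗ[F] M}

theorem apply_inv_apply (hg : IsPseudoInverse β g) (x : M) : β (g (β x)) = β x :=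
  LinearMap.congr_fun hg.1 x

theorem inv_apply_inv (hg : IsPseudoInverse β g) (y : N) : g (β (g y)) = g y :=
  LinearMap.congr_fun hg.2 y

theorem isNilpotent_sub_comp_right (hg₁ : IsPseudoInverse β g₁) (hg₂ : IsPseudoInverse β g₂) :
    IsNilpotent (g₂ ∘ₗ β - g₁ ∘ₗ β) :=
  ⟨2, by ext x; simp [pow_two, hg₁.apply_inv_apply, hg₂.apply_inv_apply]⟩

theorem isNilpotent_sub_comp_left (hg₁ : IsPseudoInverse β g₁) (hg₂ : IsPseudoInverse β g₂) :
    IsNilpotent (β ∘ₗ g₂ - β ∘ₗ g₁) :=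
  ⟨2, by ext y; simp [pow_two, hg₁.apply_inv_apply, hg₂.apply_inv_apply]⟩

theorem add_eq_comp_add_comp {α : N →ₗ[F] M} (hαβ : α ∘ₗ β = 0) (hβα : β ∘ₗ α = 0)
    (hg₁ : IsPseudoInverse β g₁) (hg₂ : IsPseudoInverse β g₂) :
    α + g₂ = (1 + (g₂ ∘ₗ β - g₁ ∘ₗ β)) ∘ₗ (α + g₁) ∘ₗ (1 + (β ∘ₗ g₂ - β ∘ₗ g₁)) := by
  have hαβ' (x : M) : α (β x) = 0 := LinearMap.congr_fun hαβ x
  have hβα' (y : N) : β (α y) = 0 := LinearMap.congr_fun hβα y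
  ext y
  simp [hαβ', hβα', hg₁.apply_inv_apply, hg₁.inv_apply_inv, hg₂.inv_apply_inv]

theorem bijective_add [FiniteDimensional F M] [FiniteDimensional F N]
    (hdim : finrank F N = finrank F M) {α : N →ₗ[F] M}
    (hker : LinearMap.ker α ≤ LinearMap.range β) (hrange : LinearMap.range α ≤ LinearMap.ker β)
    (hg : IsPseudoInverse β g) : Function.Bijective (α + g) := by
  have hinj : Function.Injective (α + g) := by
    rw [← LinearMap.ker_eq_bot, LinearMap.ker_eq_bot']
    intro x hx
    have hgx : g x = 0 := by
      have hβgx : β (g x) = 0 := by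
        simpa [show β (α x) = 0 from hrange ⟨x, rfl⟩] using congrArg β hx
      rw [← hg.inv_apply_inv, hβgx, map_zero]
    obtain ⟨y, rfl⟩ := hker (show α x = 0 by simpa [hgx] using hx)
    rw [← hg.apply_inv_apply, hgx, map_zero]
  exact ⟨hinj, (LinearMap.injective_iff_surjective_of_finrank_eq_finrank hdim).mp hinj⟩

end IsPseudoInverse

/-- If `α` is an odd exact endomorphism of `E = E₊ ⊕ E₋` (components
`α₊ : E₊ → E₋`, `α₋ : E₋ → E₊` with `Ker α₊ = Im α₋` and `Ker α₋ = Im α₊`), and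
`g₁, g₂` are two pseudo-inverses of `α₋`, then `α₊ + g₁` and `α₊ + g₂` are both
isomorphisms and they induce the same map on top exterior powers
`det(E₊) → det(E₋)`. -/
theorem torsion_independent_of_pseudoinverse
    {F : Type} [Field F] {Ep Em : Type} [AddCommGroup Ep] [Module F Ep]
    [AddCommGroup Em] [Module F Em] [FiniteDimensional F Ep] [FiniteDimensional F Em]
    (hdim : finrank F Ep = finrank F Em)
    (αp : Ep →ₗ[F] Em) (αm : Em →ₗ[F] Ep)
    (hex1 : LinearMap.ker αp = LinearMap.range αm)
    (hex2 : LinearMap.ker αm = LinearMap.range αp)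
    (g1 g2 : Ep →ₗ[F] Em)
    (hg1 : IsPseudoInverse αm g1) (hg2 : IsPseudoInverse αm g2) :
    Function.Bijective (αp + g1) ∧ Function.Bijective (αp + g2) ∧
      ∀ x ∈ (⋀[F]^(finrank F Ep) Ep : Submodule F (ExteriorAlgebra F Ep)),
        ExteriorAlgebra.map (αp + g1) x = ExteriorAlgebra.map (αp + g2) x := by
  refine ⟨hg1.bijective_add hdim hex1.le hex2.ge, hg2.bijective_add hdim hex1.le hex2.ge,
    fun x hx => ?_⟩
  have hαpαm : αp ∘ₗ αm = 0 := LinearMap.range_le_ker_iff.mp hex1.ge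
  have hαmαp : αm ∘ₗ αp = 0 := LinearMap.range_le_ker_iff.mp hex2.ge
  have hdetEp := LinearMap.det_one_add_of_isNilpotent (hg1.isNilpotent_sub_comp_left hg2)
  have hdetEm := LinearMap.det_one_add_of_isNilpotent (hg1.isNilpotent_sub_comp_right hg2)
  have hφx := ExteriorAlgebra.map_mem_exteriorPower (αp + g1) hx
  rw [hg1.add_eq_comp_add_comp hαpαm hαmαp hg2, ← ExteriorAlgebra.map_comp_map,
    ← ExteriorAlgebra.map_comp_map, AlgHom.comp_apply, AlgHom.comp_apply,
    ExteriorAlgebra.map_apply_eq_det_smul rfl _ hx, hdetEp, one_smul,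
    ExteriorAlgebra.map_apply_eq_det_smul hdim.symm _ hφx, hdetEm, one_smul]
end

section
/- Let X¹ →^{v¹} X² →^{v²} X³ →^{v³} X¹ be an odd triangle of Z₂-graded chain complexes which is homotopy exact, i.e. there exist odd linear maps t¹ : X² → X¹, t² : X³ → X², t³ : X¹ → X³ such that d^{i-1} t^{i-1} + t^{i-1} d^i = v^{i+1} v^i for all i (indices mod 3), and such that each chain map v^{i-1} t^{i-1} + t^i v^i : X^i → X^i induces the identity on homology. Then the induced six-term sequence of homology groups H_+(X¹) → H_-(X²) → H_+(X³) → H_-(X¹) → H_+(X²) → H_-(X³) → H_+(X¹) is exact. -/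
lemma six_aux {F : Type} [Field F] {Ap Am Bp Bm Cp Cm : Type}
    [AddCommGroup Ap] [Module F Ap] [AddCommGroup Am] [Module F Am]
    [AddCommGroup Bp] [Module F Bp] [AddCommGroup Bm] [Module F Bm]
    [AddCommGroup Cp] [Module F Cp] [AddCommGroup Cm] [Module F Cm]
    (dA : Ap →ₗ[F] Am) (dBp : Bp →ₗ[F] Bm) (dBm : Bm →ₗ[F] Bp) (dCm : Cm →ₗ[F] Cp)
    (u : Ap →ₗ[F] Bm) (s : Bm →ₗ[F] Ap) (r : Cm →ₗ[F] Ap) (p : Cm →ₗ[F] Bp)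
    (q : Cp →ₗ[F] Bm) (f : Bm →ₗ[F] Cp) (g : Cp →ₗ[F] Am) (h : Bp →ₗ[F] Am)
    (H1 : ∀ x : Bm, dBm x = 0 → ∃ y, (u (s x) + q (f x)) - x = dBp y)
    (H2 : dBp ∘ₗ p + q ∘ₗ dCm = u ∘ₗ r)
    (H3 : dA ∘ₗ s + h ∘ₗ dBm = g ∘ₗ f)
    (H4 : dA ∘ₗ r + g ∘ₗ dCm = 0) :
    ∀ x : Bm, dBm x = 0 → (∃ w, f x = dCm w) →
      ∃ a, dA a = 0 ∧ ∃ b, x - u a = dBp b := by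
  rintro x hx ⟨w, hw⟩
  obtain ⟨y, hy⟩ := H1 x hx
  have e2 : dBp (p w) = u (r w) - q (dCm w) := by
    have := LinearMap.congr_fun H2 w
    simp only [LinearMap.add_apply, LinearMap.comp_apply] at this
    rw [eq_sub_iff_add_eq]; exact this
  have e3 : dA (s x) = g (dCm w) := by
    have := LinearMap.congr_fun H3 x
    simp only [LinearMap.add_apply, LinearMap.comp_apply] at this
    rw [hx, map_zero, add_zero, hw] at this; exact this
  have e4 : dA (r w) + g (dCm w) = 0 := by
    have := LinearMap.congr_fun H4 w
    simp only [LinearMap.add_apply, LinearMap.comp_apply, LinearMap.zero_apply] at this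
    exact this
  refine ⟨s x + r w, ?_, -(y + p w), ?_⟩
  · rw [map_add, e3, add_comm]; exact e4
  · have e1 : dBp y = u (s x) + q (dCm w) - x := by rw [← hy, hw]
    simp only [map_neg, map_add]; rw [e1, e2]; abel


/-- Let `X¹ → X² → X³ → X¹` be an odd triangle of `ℤ₂`-graded chain
complexes (odd chain maps `v¹, v², v³` anticommuting with the differentials)
which is homotopy exact: there are odd linear maps `t¹ : X² → X¹`, `t² : X³ → X²`,
`t³ : X¹ → X³` with `d t + t d = v v` and such that `v t + t v` induces the
identity on homology.  Then the induced six-term sequence of homology groups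
`H₊(X¹) → H₋(X²) → H₊(X³) → H₋(X¹) → H₊(X²) → H₋(X³) → H₊(X¹)` is exact
(expressed elementwise on cycle representatives). -/
theorem six_term_exact_of_homotopy_exact
    {F : Type} [Field F]
    {V1p V1m V2p V2m V3p V3m : Type}
    [AddCommGroup V1p] [Module F V1p] [AddCommGroup V1m] [Module F V1m]
    [AddCommGroup V2p] [Module F V2p] [AddCommGroup V2m] [Module F V2m]
    [AddCommGroup V3p] [Module F V3p] [AddCommGroup V3m] [Module F V3m]
    -- the differentials
    (d1p : V1p →ₗ[F] V1m) (d1m : V1m →ₗ[F] V1p)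
    (d2p : V2p →ₗ[F] V2m) (d2m : V2m →ₗ[F] V2p)
    (d3p : V3p →ₗ[F] V3m) (d3m : V3m →ₗ[F] V3p)
    (hd1 : d1m ∘ₗ d1p = 0) (hd1' : d1p ∘ₗ d1m = 0)
    (hd2 : d2m ∘ₗ d2p = 0) (hd2' : d2p ∘ₗ d2m = 0)
    (hd3 : d3m ∘ₗ d3p = 0) (hd3' : d3p ∘ₗ d3m = 0)
    -- the odd chain maps v¹ : X¹ → X², v² : X² → X³, v³ : X³ → X¹
    (v1p : V1p →ₗ[F] V2m) (v1m : V1m →ₗ[F] V2p)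
    (v2p : V2p →ₗ[F] V3m) (v2m : V2m →ₗ[F] V3p)
    (v3p : V3p →ₗ[F] V1m) (v3m : V3m →ₗ[F] V1p)
    (hv1a : d2m ∘ₗ v1p + v1m ∘ₗ d1p = 0) (hv1b : d2p ∘ₗ v1m + v1p ∘ₗ d1m = 0)
    (hv2a : d3m ∘ₗ v2p + v2m ∘ₗ d2p = 0) (hv2b : d3p ∘ₗ v2m + v2p ∘ₗ d2m = 0)
    (hv3a : d1m ∘ₗ v3p + v3m ∘ₗ d3p = 0) (hv3b : d1p ∘ₗ v3m + v3p ∘ₗ d3m = 0)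
    -- the odd homotopies t¹ : X² → X¹, t² : X³ → X², t³ : X¹ → X³
    (t1p : V2p →ₗ[F] V1m) (t1m : V2m →ₗ[F] V1p)
    (t2p : V3p →ₗ[F] V2m) (t2m : V3m →ₗ[F] V2p)
    (t3p : V1p →ₗ[F] V3m) (t3m : V1m →ₗ[F] V3p)
    -- d t + t d = v v (at X², X³ and X¹ respectively)
    (hh1a : d1m ∘ₗ t1p + t1m ∘ₗ d2p = v3m ∘ₗ v2p)
    (hh1b : d1p ∘ₗ t1m + t1p ∘ₗ d2m = v3p ∘ₗ v2m)
    (hh2a : d2m ∘ₗ t2p + t2m ∘ₗ d3p = v1m ∘ₗ v3p)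
    (hh2b : d2p ∘ₗ t2m + t2p ∘ₗ d3m = v1p ∘ₗ v3m)
    (hh3a : d3m ∘ₗ t3p + t3m ∘ₗ d1p = v2m ∘ₗ v1p)
    (hh3b : d3p ∘ₗ t3m + t3p ∘ₗ d1m = v2p ∘ₗ v1m)
    -- v t + t v induces the identity on homology
    (hid1a : ∀ x : V1p, d1p x = 0 → ∃ y, (v3m (t3p x) + t1m (v1p x)) - x = d1m y)
    (hid1b : ∀ x : V1m, d1m x = 0 → ∃ y, (v3p (t3m x) + t1p (v1m x)) - x = d1p y)
    (hid2a : ∀ x : V2p, d2p x = 0 → ∃ y, (v1m (t1p x) + t2m (v2p x)) - x = d2m y)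
    (hid2b : ∀ x : V2m, d2m x = 0 → ∃ y, (v1p (t1m x) + t2p (v2m x)) - x = d2p y)
    (hid3a : ∀ x : V3p, d3p x = 0 → ∃ y, (v2m (t2p x) + t3m (v3p x)) - x = d3m y)
    (hid3b : ∀ x : V3m, d3m x = 0 → ∃ y, (v2p (t2m x) + t3p (v3m x)) - x = d3p y) :
    -- exactness of the induced six-term sequence of homology groups
    -- at H₋(X²):
    ((∀ x : V2m, d2m x = 0 → (∃ w : V3m, v2m x = d3m w) →
        ∃ u : V1p, d1p u = 0 ∧ ∃ b : V2p, x - v1p u = d2p b) ∧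
    -- at H₊(X³):
      (∀ x : V3p, d3p x = 0 → (∃ w : V1p, v3p x = d1p w) →
        ∃ u : V2m, d2m u = 0 ∧ ∃ b : V3m, x - v2m u = d3m b) ∧
    -- at H₋(X¹):
      (∀ x : V1m, d1m x = 0 → (∃ w : V2m, v1m x = d2m w) →
        ∃ u : V3p, d3p u = 0 ∧ ∃ b : V1p, x - v3p u = d1p b) ∧
    -- at H₊(X²):
      (∀ x : V2p, d2p x = 0 → (∃ w : V3p, v2p x = d3p w) →
        ∃ u : V1m, d1m u = 0 ∧ ∃ b : V2m, x - v1m u = d2m b) ∧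
    -- at H₋(X³):
      (∀ x : V3m, d3m x = 0 → (∃ w : V1m, v3m x = d1m w) →
        ∃ u : V2p, d2p u = 0 ∧ ∃ b : V3p, x - v2p u = d3p b) ∧
    -- at H₊(X¹):
      (∀ x : V1p, d1p x = 0 → (∃ w : V2p, v1p x = d2p w) →
        ∃ u : V3m, d3m u = 0 ∧ ∃ b : V1m, x - v3m u = d1m b)) := by
  refine ⟨?_, ?_, ?_, ?_, ?_, ?_⟩
  · exact six_aux d1p d2p d2m d3m v1p t1m v3m t2m t2p v2m v3p t1p hid2b hh2b hh1b hv3b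
  · exact six_aux d2m d3m d3p d1p v2m t2p v1p t3p t3m v3p v1m t2m hid3a hh3a hh2a hv1a
  · exact six_aux d3p d1p d1m d2m v3p t3m v2m t1m t1p v1m v2p t3p hid1b hh1b hh3b hv2b
  · exact six_aux d1m d2m d2p d3p v1m t1p v3p t2p t2m v2p v3m t1m hid2a hh2a hh1a hv3a
  · exact six_aux d2p d3p d3m d1m v2p t2m v1m t3m t3p v3m v1p t2p hid3b hh3b hh2b hv1b
  · exact six_aux d3m d1m d1p d2p v3m t3p v2p t1p t1m v1p v2m t3m hid1a hh1a hh3a hv2a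
end

section
/- Let V be a finite dimensional Z₂-graded vector space with two anticommuting odd exact endomorphisms v and h (vh + hv = 0, Ker(v_±) = Im(v_∓), Ker(h_±) = Im(h_∓)). Then v and h induce odd isomorphisms on the quotient spaces: v and h each map Ker(vh)/(Ker(v) + Ker(h)) isomorphically onto (Ker(v) ∩ Ker(h))/Im(vh), and v maps V/Ker(vh) isomorphically onto Ker(v)/(Ker(v) ∩ Ker(h)), while h maps V/Ker(vh) isomorphically onto Ker(h)/(Ker(v) ∩ Ker(h)). -/
open Module

variable {F : Type} [Field F] {Vp Vm : Type} [AddCommGroup Vp] [Module F Vp]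
  [AddCommGroup Vm] [Module F Vm]

/-- Let `V = V₊ ⊕ V₋` be a finite dimensional `ℤ₂`-graded vector
space with two anticommuting odd exact endomorphisms `v` and `h` (components
`v₊ : V₊ → V₋`, `v₋ : V₋ → V₊`, similarly for `h`; `vh + hv = 0`;
`Ker v₊ = Im v₋`, `Ker v₋ = Im v₊`, `Ker h₊ = Im h₋`, `Ker h₋ = Im h₊`).
Then `v` and `h` induce odd isomorphisms
`Ker(vh)/(Ker v + Ker h) → (Ker v ∩ Ker h)/Im(vh)` and
`v : V/Ker(vh) → Ker v/(Ker v ∩ Ker h)`, `h : V/Ker(vh) → Ker h/(Ker v ∩ Ker h)`.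
All isomorphism statements are expressed elementwise on representatives, on both
graded components. -/
theorem induced_odd_isomorphisms
    [FiniteDimensional F Vp] [FiniteDimensional F Vm]
    (vp hp : Vp →ₗ[F] Vm) (vm hm : Vm →ₗ[F] Vp)
    (hanti1 : vm ∘ₗ hp + hm ∘ₗ vp = 0) (hanti2 : vp ∘ₗ hm + hp ∘ₗ vm = 0)
    (hv1 : LinearMap.ker vp = LinearMap.range vm)
    (hv2 : LinearMap.ker vm = LinearMap.range vp)
    (hh1 : LinearMap.ker hp = LinearMap.range hm)
    (hh2 : LinearMap.ker hm = LinearMap.range hp) :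
    -- v : Ker(vh)/(Ker v + Ker h) → (Ker v ∩ Ker h)/Im(vh), even to odd part
    ((∀ x : Vp, vm (hp x) = 0 → (∃ u, vp x = vp (hm u)) →
        ∃ a b, vp a = 0 ∧ hp b = 0 ∧ x = a + b) ∧
      (∀ y : Vm, vm y = 0 → hm y = 0 →
        ∃ x, vm (hp x) = 0 ∧ ∃ u, y - vp x = vp (hm u))) ∧
    -- v : Ker(vh)/(Ker v + Ker h) → (Ker v ∩ Ker h)/Im(vh), odd to even part
    ((∀ x : Vm, vp (hm x) = 0 → (∃ u, vm x = vm (hp u)) →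
        ∃ a b, vm a = 0 ∧ hm b = 0 ∧ x = a + b) ∧
      (∀ y : Vp, vp y = 0 → hp y = 0 →
        ∃ x, vp (hm x) = 0 ∧ ∃ u, y - vm x = vm (hp u))) ∧
    -- h : Ker(vh)/(Ker v + Ker h) → (Ker v ∩ Ker h)/Im(vh), even to odd part
    ((∀ x : Vp, vm (hp x) = 0 → (∃ u, hp x = vp (hm u)) →
        ∃ a b, vp a = 0 ∧ hp b = 0 ∧ x = a + b) ∧
      (∀ y : Vm, vm y = 0 → hm y = 0 →
        ∃ x, vm (hp x) = 0 ∧ ∃ u, y - hp x = vp (hm u))) ∧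
    -- h : Ker(vh)/(Ker v + Ker h) → (Ker v ∩ Ker h)/Im(vh), odd to even part
    ((∀ x : Vm, vp (hm x) = 0 → (∃ u, hm x = vm (hp u)) →
        ∃ a b, vm a = 0 ∧ hm b = 0 ∧ x = a + b) ∧
      (∀ y : Vp, vp y = 0 → hp y = 0 →
        ∃ x, vp (hm x) = 0 ∧ ∃ u, y - hm x = vm (hp u))) ∧
    -- v : V/Ker(vh) → Ker v/(Ker v ∩ Ker h), even to odd part
    ((∀ x : Vp, vm (vp x) = 0 → hm (vp x) = 0 → vm (hp x) = 0) ∧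
      (∀ y : Vm, vm y = 0 → ∃ x : Vp, vm (y - vp x) = 0 ∧ hm (y - vp x) = 0)) ∧
    -- v : V/Ker(vh) → Ker v/(Ker v ∩ Ker h), odd to even part
    ((∀ x : Vm, vp (vm x) = 0 → hp (vm x) = 0 → vp (hm x) = 0) ∧
      (∀ y : Vp, vp y = 0 → ∃ x : Vm, vp (y - vm x) = 0 ∧ hp (y - vm x) = 0)) ∧
    -- h : V/Ker(vh) → Ker h/(Ker v ∩ Ker h), even to odd part
    ((∀ x : Vp, vm (hp x) = 0 → hm (hp x) = 0 → hm (vp x) = 0) ∧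
      (∀ y : Vm, hm y = 0 → ∃ x : Vp, vm (y - hp x) = 0 ∧ hm (y - hp x) = 0)) ∧
    -- h : V/Ker(vh) → Ker h/(Ker v ∩ Ker h), odd to even part
    ((∀ x : Vm, vp (hm x) = 0 → hp (hm x) = 0 → hp (vm x) = 0) ∧
      (∀ y : Vp, hp y = 0 → ∃ x : Vm, vp (y - hm x) = 0 ∧ hp (y - hm x) = 0)) := by
  have pv : ∀ x : Vm, vp (vm x) = 0 := fun x =>
    LinearMap.mem_ker.mp (hv1 ▸ LinearMap.mem_range_self vm x)
  have mv : ∀ x : Vp, vm (vp x) = 0 := fun x =>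
    LinearMap.mem_ker.mp (hv2 ▸ LinearMap.mem_range_self vp x)
  have ph : ∀ x : Vm, hp (hm x) = 0 := fun x =>
    LinearMap.mem_ker.mp (hh1 ▸ LinearMap.mem_range_self hm x)
  have mh : ∀ x : Vp, hm (hp x) = 0 := fun x =>
    LinearMap.mem_ker.mp (hh2 ▸ LinearMap.mem_range_self hp x)
  have a1 : ∀ x : Vp, vm (hp x) = - hm (vp x) := fun x => by
    have h := LinearMap.congr_fun hanti1 x
    simp only [LinearMap.add_apply, LinearMap.comp_apply, LinearMap.zero_apply] at h
    exact eq_neg_of_add_eq_zero_left h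
  have a2 : ∀ x : Vm, vp (hm x) = - hp (vm x) := fun x => by
    have h := LinearMap.congr_fun hanti2 x
    simp only [LinearMap.add_apply, LinearMap.comp_apply, LinearMap.zero_apply] at h
    exact eq_neg_of_add_eq_zero_left h
  refine ⟨⟨?_, ?_⟩, ⟨?_, ?_⟩, ⟨?_, ?_⟩, ⟨?_, ?_⟩, ⟨?_, ?_⟩, ⟨?_, ?_⟩, ⟨?_, ?_⟩, ?_, ?_⟩
  · rintro x - ⟨u, hu⟩
    exact ⟨x - hm u, hm u, by rw [map_sub, hu, sub_self], ph u, by abel⟩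
  · intro y hy1 hy2
    obtain ⟨z, hz⟩ := hv2 ▸ LinearMap.mem_ker.mpr hy1
    exact ⟨z, by rw [a1, hz, hy2, neg_zero], 0, by rw [hz, sub_self, map_zero, map_zero]⟩
  · rintro x - ⟨u, hu⟩
    exact ⟨x - hp u, hp u, by rw [map_sub, hu, sub_self], mh u, by abel⟩
  · intro y hy1 hy2
    obtain ⟨z, hz⟩ := hv1 ▸ LinearMap.mem_ker.mpr hy1
    exact ⟨z, by rw [a2, hz, hy2, neg_zero], 0, by rw [hz, sub_self, map_zero, map_zero]⟩
  · rintro x - ⟨u, hu⟩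
    refine ⟨-vm u, x + vm u, by rw [map_neg, pv, neg_zero], ?_, by abel⟩
    rw [map_add, hu, a2, neg_add_cancel]
  · intro y hy1 hy2
    obtain ⟨z, hz⟩ := hh2 ▸ LinearMap.mem_ker.mpr hy2
    refine ⟨z, ?_, 0, by rw [hz, sub_self, map_zero, map_zero]⟩
    rw [hz, hy1]
  · rintro x - ⟨u, hu⟩
    refine ⟨-vp u, x + vp u, by rw [map_neg, mv, neg_zero], ?_, by abel⟩
    rw [map_add, hu, a1, neg_add_cancel]
  · intro y hy1 hy2
    obtain ⟨z, hz⟩ := hh1 ▸ LinearMap.mem_ker.mpr hy2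
    refine ⟨z, ?_, 0, by rw [hz, sub_self, map_zero, map_zero]⟩
    rw [hz, hy1]
  · intro x _ hx2
    rw [a1, hx2, neg_zero]
  · intro y hy
    obtain ⟨z, hz⟩ := hv2 ▸ LinearMap.mem_ker.mpr hy
    exact ⟨z, by rw [hz, sub_self, map_zero], by rw [hz, sub_self, map_zero]⟩
  · intro x _ hx2
    rw [a2, hx2, neg_zero]
  · intro y hy
    obtain ⟨z, hz⟩ := hv1 ▸ LinearMap.mem_ker.mpr hy
    exact ⟨z, by rw [hz, sub_self, map_zero], by rw [hz, sub_self, map_zero]⟩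
  · intro x hx1 _
    rw [show hm (vp x) = - vm (hp x) by rw [a1 x, neg_neg], hx1, neg_zero]
  · intro y hy
    obtain ⟨z, hz⟩ := hh2 ▸ LinearMap.mem_ker.mpr hy
    exact ⟨z, by rw [hz, sub_self, map_zero], by rw [hz, sub_self, map_zero]⟩
  · intro x hx1 _
    rw [show hp (vm x) = - vp (hm x) by rw [a2 x, neg_neg], hx1, neg_zero]
  · intro y hy
    obtain ⟨z, hz⟩ := hh1 ▸ LinearMap.mem_ker.mpr hy
    exact ⟨z, by rw [hz, sub_self, map_zero], by rw [hz, sub_self, map_zero]⟩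
end
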